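/- arXiv:2008.13260 — 2 statements merged into one kernel-verified Lean document; each statement's English description precedes it below -/
import Mathlib

section
/- Let n ≥ 2, q ≥ 2, and suppose there exists an extended 1-perfect code in the Hamming graph H(n,q). Then n is even. -/
/-- The Hamming graph `H(n,q)`: vertices are `Fin n → ZMod q`, two vertices are
adjacent iff their Hamming distance is `1`. -/
def hammingGraph (n q : ℕ) : SimpleGraph (Fin n → ZMod q) where
  Adj x y := hammingDist x y = 1
  symm := ⟨by intro x y h; rwa [hammingDist_comm]⟩
  loopless := ⟨by intro x h; simp [hammingDist_self] at h⟩

/-- The distance from a vertex `x` to a code `C` in a graph `G`. -/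
noncomputable def distToCode {V : Type*} (G : SimpleGraph V) (C : Set V) (x : V) : ℕ :=
  sInf {d : ℕ | ∃ c ∈ C, G.dist x c = d}

/-- The code distance of a code `C` in a graph `G`: the minimum distance between
two distinct codewords. -/
noncomputable def codeDist {V : Type*} (G : SimpleGraph V) (C : Set V) : ℕ :=
  sInf {d : ℕ | ∃ x ∈ C, ∃ y ∈ C, x ≠ y ∧ G.dist x y = d}

/-- A code `C` is `1`-perfect if every vertex is at distance at most `1`
from exactly one codeword. -/
def IsOnePerfect {V : Type*} (G : SimpleGraph V) (C : Set V) : Prop :=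
  ∀ x, ∃! c, c ∈ C ∧ G.dist x c ≤ 1

/-- Deleting the `i`-th coordinate of a tuple. -/
def deleteCoord {α : Type*} {n : ℕ} (i : Fin n) (c : Fin n → α) (j : Fin (n - 1)) : α :=
  c (Fin.cast (show n - 1 + 1 = n by have := i.pos; omega)
      ((Fin.cast (show n = n - 1 + 1 by have := i.pos; omega) i).succAbove j))

/-- The projection (puncturing) of a code in `H(n,q)` at coordinate `i`. -/
def hammingProj {n q : ℕ} (i : Fin n) (C : Set (Fin n → ZMod q)) :
    Set (Fin (n - 1) → ZMod q) :=
  (deleteCoord i) '' C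

/-- A code `C` in `H(n,q)` is extended `1`-perfect if it is nonempty, its code distance
is `4`, and its projection at some coordinate is a `1`-perfect code in `H(n-1,q)`. -/
def IsExtOnePerfectH (n q : ℕ) (C : Set (Fin n → ZMod q)) : Prop :=
  C.Nonempty ∧ codeDist (hammingGraph n q) C = 4 ∧
    ∃ i : Fin n, IsOnePerfect (hammingGraph (n - 1) q) (hammingProj i C)

/-- A perfect coloring of `G` in `k` colors with quotient matrix `S`: a surjective map
`f` onto the colors such that every vertex of color `i` has exactly `S i j` neighbours
of color `j`. -/
def IsPerfectColoring {V : Type*} (G : SimpleGraph V) {k : ℕ} (f : V → Fin k)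
    (S : Matrix (Fin k) (Fin k) ℤ) : Prop :=
  Function.Surjective f ∧
    ∀ v j, (({u | G.Adj v u ∧ f u = j} : Set V).ncard : ℤ) = S (f v) j

/-- A code `C` in `G` is completely regular with quotient matrix `S` if the distance
coloring `x ↦ d(x, C)` is a perfect coloring with quotient matrix `S`. -/
def IsCompletelyRegular {V : Type*} (G : SimpleGraph V) (C : Set V) {k : ℕ}
    (S : Matrix (Fin k) (Fin k) ℤ) : Prop :=
  ∃ h : ∀ x, distToCode G C x < k,
    IsPerfectColoring G (fun x => (⟨distToCode G C x, h x⟩ : Fin k)) S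

/-- The connecting set of the Shrikhande graph as a Cayley graph on `ℤ₄ × ℤ₄`. -/
def shrikhandeSet : Set (ZMod 4 × ZMod 4) :=
  {(0, 1), (1, 0), (0, 3), (3, 0), (1, 1), (3, 3)}

/-- The vertex set of the graph `D(m,n)`. -/
abbrev DoobV (m n : ℕ) := (Fin m → ZMod 4 × ZMod 4) × (Fin n → ZMod 4)

/-- The graph `D(m,n)`: the direct product of `m` copies of the Shrikhande graph and
`n` copies of `K₄`. Two vertices are adjacent iff they differ in exactly one
coordinate and, if it is a Shrikhande coordinate, the difference there lies in the
connecting set. For `m > 0` it is a Doob graph; `D(0,n) = H(n,4)`. -/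
def doobGraph (m n : ℕ) : SimpleGraph (DoobV m n) :=
  SimpleGraph.fromRel (fun x y =>
    (∃ i, x.1 i - y.1 i ∈ shrikhandeSet ∧ (∀ j, j ≠ i → x.1 j = y.1 j) ∧ x.2 = y.2) ∨
    (∃ i, x.2 i ≠ y.2 i ∧ (∀ j, j ≠ i → x.2 j = y.2 j) ∧ x.1 = y.1))

/-- The projection (puncturing) of a code in `D(m,n)` at the `K₄` coordinate `i`. -/
def doobProj {m n : ℕ} (i : Fin n) (C : Set (DoobV m n)) : Set (DoobV m (n - 1)) :=
  (fun x => (x.1, deleteCoord i x.2)) '' C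

/-- A code `C` in `D(m,n)`, `n ≥ 1`, is extended `1`-perfect if it is nonempty, its code
distance is `4`, and its projection at some `K₄` coordinate is a `1`-perfect code in
`D(m,n-1)`. A code `C` in `D(m,0)` is extended `1`-perfect if it is nonempty, its code
distance is `4`, and `2m = (4^l+2)/3` and `|C| = 4^(2m-l-1)` for some `l ≥ 1`. -/
def IsExtOnePerfectD (m n : ℕ) (C : Set (DoobV m n)) : Prop :=
  C.Nonempty ∧ codeDist (doobGraph m n) C = 4 ∧
    (if n = 0 then
        ∃ l : ℕ, 0 < l ∧ 3 * (2 * m) = 4 ^ l + 2 ∧ C.ncard = 4 ^ (2 * m - l - 1)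
      else ∃ i : Fin n, IsOnePerfect (doobGraph m (n - 1)) (doobProj i C))

/-!
Suppose `n` is odd and `C` is extended `1`-perfect, its puncturing at `i` being `1`-perfect.
Fix `c ∈ C`, a coordinate `l ≠ i` and a value `b ≠ c l`. Changing `c` at `l` to `b` and at one
further coordinate `k ∉ {i, l}` gives `(n - 2)(q - 1)` vertices at distance `2` from the punctured
`c`; each is covered by a punctured codeword at distance `3`, which lifts to some `t ∈ C` with
`t l = b`, `t i ≠ c i` and `d(c, t) = 4`. Each such `t` covers only two of those vertices, so
there are at least `(n - 2)(q - 1) / 2` of them. On the other hand, for every `a ≠ c i` the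
codewords `t` with `t i = a`, together with `c`, lie at distance `2` from one common vertex, so
by the minimum distance `4` their differences from it have disjoint supports: there are at most
`(n - 3) / 2` of them since `n` is odd. Summing over `a` gives the contradiction
`(n - 2)(q - 1) ≤ (n - 3)(q - 1)`.
-/

open Finset Function

section HammingDist

variable {ι α : Type*} [Fintype ι] [DecidableEq ι] [DecidableEq α]

lemma filter_ne_subset_union (x y z : ι → α) :
    ({k | x k ≠ z k} : Finset ι) ⊆ ({k | x k ≠ y k} : Finset ι) ∪ ({k | y k ≠ z k} : Finset ι) := by
  intro k
  simp only [mem_filter, mem_univ, true_and, mem_union]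
  contrapose!
  exact fun h => h.1.trans h.2

lemma apply_eq_of_hammingDist_eq_add {x y z : ι → α}
    (h : hammingDist x z = hammingDist x y + hammingDist y z) {k : ι} (hk : x k ≠ y k) :
    y k = z k := by
  by_contra hyz
  have hinter : 0 < #(({k | x k ≠ y k} : Finset ι) ∩ ({k | y k ≠ z k} : Finset ι)) :=
    card_pos.2 ⟨k, by simp [hk, hyz]⟩
  have := card_le_card (filter_ne_subset_union x y z)
  have := card_union_add_card_inter ({k | x k ≠ y k} : Finset ι) ({k | y k ≠ z k} : Finset ι)
  simp only [hammingDist] at h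
  omega

lemma hammingDist_update_le (x : ι → α) (k : ι) (v : α) :
    hammingDist (update x k v) x ≤ 1 := by
  refine (card_le_card fun l hl => ?_).trans (card_singleton k).le
  by_contra hlk
  simp [update_of_ne (mem_singleton.not.1 hlk)] at hl

lemma hammingDist_update_add_one {x y : ι → α} {k : ι} (hk : x k ≠ y k) :
    hammingDist (update x k (y k)) y + 1 = hammingDist x y := by
  have : ({l | update x k (y k) l ≠ y l} : Finset ι) = ({l | x l ≠ y l} : Finset ι).erase k := by
    ext l
    rcases eq_or_ne l k with rfl | hl <;> simp [update_of_ne, *]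
  rw [hammingDist, this, card_erase_add_one (by simpa using hk), hammingDist]

lemma hammingDist_update_update {c : ι → α} {j k : ι} (hjk : j ≠ k) {b β : α}
    (hb : b ≠ c j) (hβ : β ≠ c k) : hammingDist c (update (update c j b) k β) = 2 := by
  have : ({l | c l ≠ update (update c j b) k β l} : Finset ι) = {j, k} := by
    ext l
    rcases eq_or_ne l k with rfl | hlk
    · simp [hβ.symm]
    rcases eq_or_ne l j with rfl | hlj
    · simp [hlk, hb.symm]
    · simp [hlk, hlj]
  rw [hammingDist, this, card_pair hjk]

lemma mul_card_le_of_hammingDist_eq {x : ι → α} {r : ℕ} {S : Finset (ι → α)}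
    (hx : ∀ s ∈ S, hammingDist x s = r)
    (hS : ∀ s ∈ S, ∀ t ∈ S, s ≠ t → 2 * r ≤ hammingDist s t) :
    r * #S ≤ Fintype.card ι := by
  let supp : (ι → α) → Finset ι := fun s => {k | x k ≠ s k}
  have hsupp : ∀ s ∈ S, #(supp s) = r := hx
  have hdisj : (S : Set (ι → α)).PairwiseDisjoint supp := by
    intro s hs t ht hst
    rw [Function.onFun, disjoint_iff_ne]
    rintro k hks _ hkt rfl
    have hsub : ({k | s k ≠ t k} : Finset ι) ⊆ supp s ∪ supp t := by
      simpa only [supp, ne_comm (a := s _)] using filter_ne_subset_union s x t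
    have := card_le_card hsub
    have := card_union_add_card_inter (supp s) (supp t)
    have := card_pos.2 ⟨k, mem_inter.2 ⟨hks, hkt⟩⟩
    have := hS s hs t ht hst
    have := hsupp s hs
    have := hsupp t ht
    simp only [hammingDist] at *
    omega
  calc r * #S = #(S.biUnion supp) := by
        rw [card_biUnion hdisj, sum_congr rfl hsupp, sum_const, smul_eq_mul, mul_comm]
    _ ≤ Fintype.card ι := card_le_univ _

lemma hammingDist_eq_removeNth_add {m : ℕ} (i : Fin (m + 1)) (x y : Fin (m + 1) → α) :
    hammingDist x y =
      hammingDist (i.removeNth x) (i.removeNth y) + if x i = y i then 0 else 1 := by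
  rw [hammingDist, hammingDist, card_filter, card_filter, Fin.sum_univ_succAbove _ i, add_comm]
  congr 1
  simp only [ne_eq, ite_not]

end HammingDist

section HammingGraph

variable {n q : ℕ}

lemma hammingDist_le_length {x y : Fin n → ZMod q} (p : (hammingGraph n q).Walk x y) :
    hammingDist x y ≤ p.length := by
  induction p with
  | nil => simp
  | @cons u v w huv p ih =>
    have : hammingDist u v = 1 := huv
    have := hammingDist_triangle u v w
    rw [SimpleGraph.Walk.length_cons]
    omega

lemma exists_walk_length_eq_hammingDist (x y : Fin n → ZMod q) :
    ∃ p : (hammingGraph n q).Walk x y, p.length = hammingDist x y := by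
  induction hd : hammingDist x y generalizing x with
  | zero => cases hammingDist_eq_zero.1 hd; exact ⟨.nil, rfl⟩
  | succ d ih =>
    obtain ⟨k, hk⟩ : ∃ k, x k ≠ y k := by
      by_contra! h
      simp [funext h] at hd
    have hstep := hammingDist_update_add_one hk
    have hadj : (hammingGraph n q).Adj x (update x k (y k)) := by
      have := hammingDist_update_le x k (y k)
      have : 0 < hammingDist (update x k (y k)) x :=
        hammingDist_pos.2 fun h => hk (by simpa using (congrFun h k).symm)
      show hammingDist x (update x k (y k)) = 1
      rw [hammingDist_comm]
      omega
    obtain ⟨p, hp⟩ := ih (update x k (y k)) (by omega)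
    exact ⟨.cons hadj p, by rw [SimpleGraph.Walk.length_cons, hp]⟩

lemma hammingGraph_dist (x y : Fin n → ZMod q) :
    (hammingGraph n q).dist x y = hammingDist x y := by
  obtain ⟨p, hp⟩ := exists_walk_length_eq_hammingDist x y
  refine le_antisymm (hp ▸ SimpleGraph.dist_le p) ?_
  obtain ⟨p', hp'⟩ := SimpleGraph.Reachable.exists_walk_length_eq_dist ⟨p⟩
  exact hp' ▸ hammingDist_le_length p'

lemma codeDist_le_hammingDist {C : Set (Fin n → ZMod q)} {x y : Fin n → ZMod q}
    (hx : x ∈ C) (hy : y ∈ C) (hxy : x ≠ y) : codeDist (hammingGraph n q) C ≤ hammingDist x y :=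
  Nat.sInf_le ⟨x, hx, y, hy, hxy, hammingGraph_dist x y⟩

end HammingGraph

section PerfectCode

variable {ι α : Type*} [Fintype ι] [DecidableEq ι] [DecidableEq α]

def IsOnePerfectHamming (D : Set (ι → α)) : Prop :=
  ∀ x, ∃! d, d ∈ D ∧ hammingDist x d ≤ 1

lemma isOnePerfect_hammingGraph_iff {n q : ℕ} {D : Set (Fin n → ZMod q)} :
    IsOnePerfect (hammingGraph n q) D ↔ IsOnePerfectHamming D := by
  simp only [IsOnePerfect, hammingGraph_dist, IsOnePerfectHamming]

namespace IsOnePerfectHamming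

variable {D : Set (ι → α)}

lemma three_le_hammingDist (hD : IsOnePerfectHamming D) {a b : ι → α} (ha : a ∈ D)
    (hb : b ∈ D) (hab : a ≠ b) : 3 ≤ hammingDist a b := by
  by_contra! hlt
  obtain ⟨k, hk⟩ : ∃ k, a k ≠ b k := by
    by_contra! h
    exact hab (funext h)
  have hza := hammingDist_update_le a k (b k)
  have hzb := hammingDist_update_add_one hk
  exact hab ((hD _).unique ⟨ha, hza⟩ ⟨hb, by omega⟩)

lemma hammingDist_eq_three_of_covers (hD : IsOnePerfectHamming D) {c y d : ι → α}
    (hc : c ∈ D) (hd : d ∈ D) (hcy : hammingDist c y = 2) (hyd : hammingDist y d ≤ 1) :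
    hammingDist c d = 3 ∧ ∀ k, c k ≠ y k → d k = y k := by
  have hcd : c ≠ d := by
    rintro rfl
    rw [hammingDist_comm] at hyd
    omega
  have := hD.three_le_hammingDist hc hd hcd
  have := hammingDist_triangle c y d
  have heq : hammingDist c d = hammingDist c y + hammingDist y d := by omega
  exact ⟨by omega, fun k hk => (apply_eq_of_hammingDist_eq_add heq hk).symm⟩

open Classical in
lemma card_mul_le_two_mul_card [Fintype α] (hD : IsOnePerfectHamming D) {c : ι → α}
    (hc : c ∈ D) (j : ι) {b : α} (hb : b ≠ c j) : (Fintype.card ι - 1) * (Fintype.card α - 1) ≤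
      2 * #{d | d ∈ D ∧ hammingDist c d = 3 ∧ d j = b} := by
  set T : Finset (ι → α) := {d | d ∈ D ∧ hammingDist c d = 3 ∧ d j = b}
  -- `⟨k, β⟩` encodes `c` with coordinate `j` changed to `b` and coordinate `k` changed to `β`.
  let Y : Finset (Σ _ : ι, α) := (univ.erase j).sigma fun k => univ.erase (c k)
  let covered : (ι → α) → Finset (Σ _ : ι, α) := fun d =>
    (({k | c k ≠ d k} : Finset ι).erase j).image fun k => ⟨k, d k⟩
  have hY : Y ⊆ T.biUnion covered := by
    rintro ⟨k, β⟩ hkβ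
    simp only [Y, mem_sigma, mem_erase, mem_univ, and_true] at hkβ
    obtain ⟨hkj, hβ⟩ := hkβ
    obtain ⟨d, ⟨hd, hyd⟩, -⟩ := hD (update (update c j b) k β)
    obtain ⟨h3, hagree⟩ :=
      hD.hammingDist_eq_three_of_covers hc hd (hammingDist_update_update hkj.symm hb hβ) hyd
    have hdj := hagree j (by rw [update_of_ne hkj.symm, update_self]; exact hb.symm)
    have hdk := hagree k (by rw [update_self]; exact hβ.symm)
    rw [update_of_ne hkj.symm, update_self] at hdj
    rw [update_self] at hdk
    refine mem_biUnion.2 ⟨d, by simp [T, hd, h3, hdj], mem_image.2 ⟨k, ?_, by rw [hdk]⟩⟩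
    simp [hkj, hdk, hβ.symm]
  have hcovered : ∀ d ∈ T, #(covered d) ≤ 2 := by
    intro d hd
    simp only [T, mem_filter, mem_univ, true_and] at hd
    refine card_image_le.trans ?_
    rw [card_erase_of_mem (by simp [hd.2.2, hb.symm])]
    exact Nat.sub_le_sub_right hd.2.1.le 1
  calc (Fintype.card ι - 1) * (Fintype.card α - 1) = #Y := by
        simp [Y, card_sigma, card_erase_of_mem]
    _ ≤ #(T.biUnion covered) := card_le_card hY
    _ ≤ ∑ d ∈ T, #(covered d) := card_biUnion_le
    _ ≤ ∑ _d ∈ T, 2 := sum_le_sum hcovered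
    _ = 2 * #T := by rw [sum_const, smul_eq_mul, mul_comm]

end IsOnePerfectHamming

end PerfectCode

section MinDistanceFour

variable {ι α : Type*} [Fintype ι] [DecidableEq ι] [DecidableEq α] {C : Set (ι → α)}

open Classical in
lemma two_mul_card_add_two_le [Fintype α] (hC : ∀ s ∈ C, ∀ t ∈ C, s ≠ t → 4 ≤ hammingDist s t)
    {c : ι → α} (hc : c ∈ C) {i l : ι} (hil : i ≠ l) {a b : α} (ha : a ≠ c i) (hb : b ≠ c l) :
    2 * #{t | t ∈ C ∧ t i = a ∧ t l = b ∧ hammingDist c t = 4} + 2 ≤ Fintype.card ι := by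
  set F : Finset (ι → α) := {t | t ∈ C ∧ t i = a ∧ t l = b ∧ hammingDist c t = 4}
  have hF : ∀ t ∈ F, t ∈ C ∧ t i = a ∧ t l = b ∧ hammingDist c t = 4 := by simp [F]
  have hcF : c ∉ F := fun h => by simpa using (hF c h).2.2.2
  set x := update (update c l b) i a
  have hx : ∀ t ∈ insert c F, hammingDist x t = 2 := by
    intro t ht
    rcases mem_insert.1 ht with rfl | ht
    · rw [hammingDist_comm]
      exact hammingDist_update_update hil.symm hb ha
    obtain ⟨-, rfl, rfl, h4⟩ := hF t ht
    have h3 := hammingDist_update_add_one hb.symm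
    have h2 := hammingDist_update_add_one (x := update c l (t l)) (y := t) (k := i)
      (by rw [update_of_ne hil]; exact ha.symm)
    show hammingDist (update (update c l (t l)) i (t i)) t = 2
    omega
  have hpair : ∀ s ∈ insert c F, ∀ t ∈ insert c F, s ≠ t → 2 * 2 ≤ hammingDist s t := by
    have hmem : ∀ t ∈ insert c F, t ∈ C := by
      intro t ht
      rcases mem_insert.1 ht with rfl | ht
      exacts [hc, (hF t ht).1]
    exact fun s hs t ht hst => hC s (hmem s hs) t (hmem t ht) hst
  have := mul_card_le_of_hammingDist_eq hx hpair
  rw [card_insert_of_notMem hcF] at this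
  omega

open Classical in
lemma two_mul_card_le_of_odd [Fintype α] (hC : ∀ s ∈ C, ∀ t ∈ C, s ≠ t → 4 ≤ hammingDist s t)
    {c : ι → α} (hc : c ∈ C) {i l : ι} (hil : i ≠ l) {b : α} (hb : b ≠ c l)
    (hodd : Odd (Fintype.card ι)) :
    2 * #{t | t ∈ C ∧ t i ≠ c i ∧ t l = b ∧ hammingDist c t = 4} ≤
      (Fintype.card α - 1) * (Fintype.card ι - 3) := by
  set T : Finset (ι → α) := {t | t ∈ C ∧ t i ≠ c i ∧ t l = b ∧ hammingDist c t = 4}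
  have hfiber : ∀ a ∈ univ.erase (c i), 2 * #{t ∈ T | t i = a} ≤ Fintype.card ι - 3 := by
    intro a ha
    have hsub : {t ∈ T | t i = a} ⊆
        ({t | t ∈ C ∧ t i = a ∧ t l = b ∧ hammingDist c t = 4} : Finset (ι → α)) := by
      intro t
      simp +contextual [T]
    have := card_le_card hsub
    have := two_mul_card_add_two_le hC hc hil (ne_of_mem_erase ha) hb
    obtain ⟨k, hk⟩ := hodd
    omega
  rw [card_eq_sum_card_fiberwise (f := fun t => t i) (t := univ.erase (c i))
    fun t ht => mem_erase.2 ⟨(mem_filter.1 ht).2.2.1, mem_univ _⟩,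
    mul_sum]
  calc ∑ a ∈ univ.erase (c i), 2 * #{t ∈ T | t i = a}
      ≤ ∑ _a ∈ univ.erase (c i), (Fintype.card ι - 3) := sum_le_sum hfiber
    _ = (Fintype.card α - 1) * (Fintype.card ι - 3) := by
      rw [sum_const, card_erase_of_mem (mem_univ _), card_univ, smul_eq_mul]

open Classical in
lemma card_filter_removeNth_le [Fintype α] {m : ℕ} {C : Set (Fin (m + 1) → α)}
    (hC : ∀ s ∈ C, ∀ t ∈ C, s ≠ t → 4 ≤ hammingDist s t) {c : Fin (m + 1) → α} (hc : c ∈ C)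
    (i : Fin (m + 1)) (j : Fin m) (b : α) :
    #{d | d ∈ i.removeNth '' C ∧ hammingDist (i.removeNth c) d = 3 ∧ d j = b} ≤
      #{t | t ∈ C ∧ t i ≠ c i ∧ t (i.succAbove j) = b ∧ hammingDist c t = 4} := by
  refine (card_le_card fun d hd => ?_).trans
    (card_image_le (f := fun t => (i.removeNth t : Fin m → α)))
  simp only [mem_filter, mem_univ, true_and] at hd
  obtain ⟨⟨t, ht, rfl⟩, h3, hj⟩ := hd
  have hct : c ≠ t := by
    rintro rfl
    simp at h3
  have h4 := hC c hc t ht hct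
  have hsplit := hammingDist_eq_removeNth_add i c t
  split_ifs at hsplit with hi
  · omega
  · exact mem_image.2 ⟨t, mem_filter.2 ⟨mem_univ _, ht, Ne.symm hi, hj, by omega⟩, rfl⟩

end MinDistanceFour

/-- Proposition 2 (Statement 12): if there is an extended `1`-perfect code in `H(n,q)`,
then `n` is even. -/
theorem statement12 (n q : ℕ) (hn : 2 ≤ n) (hq : 2 ≤ q)
    (h : ∃ C : Set (Fin n → ZMod q), IsExtOnePerfectH n q C) : Even n := by
  refine Nat.not_odd_iff_even.1 fun hodd => ?_
  obtain ⟨m, rfl⟩ : ∃ m, n = m + 1 := ⟨n - 1, by omega⟩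
  have hm : 2 ≤ m := by
    obtain ⟨k, hk⟩ := hodd
    omega
  have : NeZero q := ⟨by omega⟩
  have : Fact (1 < q) := ⟨hq⟩
  obtain ⟨C, ⟨c, hc⟩, hdist, i, hperf⟩ := h
  have hC : ∀ s ∈ C, ∀ t ∈ C, s ≠ t → 4 ≤ hammingDist s t := fun s hs t ht hst =>
    hdist ▸ codeDist_le_hammingDist hs ht hst
  -- For `n = m + 1`, `deleteCoord i` is definitionally `Fin.removeNth i`.
  have hD : IsOnePerfectHamming (i.removeNth '' C : Set (Fin m → ZMod q)) :=
    isOnePerfect_hammingGraph_iff.1 hperf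
  let j : Fin m := ⟨0, by omega⟩
  obtain ⟨b, hb⟩ := exists_ne (c (i.succAbove j))
  have hlower := hD.card_mul_le_two_mul_card ⟨c, hc, rfl⟩ j hb
  have hupper := two_mul_card_le_of_odd hC hc (Fin.succAbove_ne i j).symm hb
    (by rwa [Fintype.card_fin])
  have hlift := card_filter_removeNth_le hC hc i j b
  simp only [Fintype.card_fin, ZMod.card] at hlower hupper
  have key : (q - 1) * (m - 1) ≤ (q - 1) * (m - 2) := by
    calc (q - 1) * (m - 1) = (m - 1) * (q - 1) := mul_comm _ _
      _ ≤ (q - 1) * (m + 1 - 3) := hlower.trans ((Nat.mul_le_mul_left 2 hlift).trans hupper)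
      _ = (q - 1) * (m - 2) := rfl
  have := Nat.le_of_mul_le_mul_left key (by omega)
  omega
end

section
/- Let q ≥ 3 be odd. Then there does not exist an MDS code with distance 4 in the Hamming graph H(q+2,q); that is, there is no code C in H(q+2,q) with code distance 4 and |C| = q^{q−1}. -/
/-!
Let `C` have distance `4` and size `q^(q-1)` in `H(q+2,q)`. Puncturing `C` at any coordinate `i`
gives a code of distance at least `3` and the same size in `H(q+1,q)`; it meets the
sphere-packing bound `q^(q-1) (1 + (q+1)(q-1)) = q^(q+1)`, so it is perfect. Hence, for a word `x`
at distance at least `2` from `C` and every coordinate `i`, some codeword at distance exactly `2`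
from `x` differs from `x` at `i`. The two-element sets of coordinates where these codewords differ
from `x` are pairwise disjoint, since `C` has distance `4`, and they cover all `q + 2`
coordinates; so `q + 2` is even.
-/

open Finset Function Fintype

section HammingCodes

variable {ι α : Type*} [Fintype ι] [DecidableEq ι] [DecidableEq α]

lemma hammingDist_eq_one_iff {x y : ι → α} :
    hammingDist x y = 1 ↔ ∃ i, ∃ a ≠ y i, x = update y i a := by
  constructor
  · intro h
    obtain ⟨i, hi⟩ := card_eq_one.1 h
    simp only [Finset.ext_iff, mem_filter, mem_univ, true_and, mem_singleton] at hi
    refine ⟨i, x i, (hi i).2 rfl, funext fun j => ?_⟩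
    by_cases hj : j = i
    · subst hj; simp
    · rw [update_of_ne hj]
      exact not_not.1 (mt (hi j).1 hj)
  · rintro ⟨i, a, ha, rfl⟩
    refine card_eq_one.2 ⟨i, ?_⟩
    ext j
    by_cases hj : j = i
    · subst hj; simpa using ha
    · simp [hj]

lemma hammingDist_eq_hammingDist_removeNth_add {n : ℕ} (x y : Fin (n + 1) → α)
    (i : Fin (n + 1)) :
    hammingDist x y = hammingDist (i.removeNth x) (i.removeNth y) + if x i ≠ y i then 1 else 0 := by
  simp only [hammingDist, card_filter]
  rw [Fin.sum_univ_succAbove _ i, add_comm]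
  rfl

lemma disjoint_filter_ne_of_hammingDist_eq_two {x c c' : ι → α} (hc : hammingDist x c = 2)
    (hc' : hammingDist x c' = 2) (hcc' : 4 ≤ hammingDist c c') :
    Disjoint ({j | x j ≠ c j} : Finset ι) ({j | x j ≠ c' j} : Finset ι) := by
  have hsub : ({j | c j ≠ c' j} : Finset ι) ⊆
      ({j | x j ≠ c j} : Finset ι) ∪ ({j | x j ≠ c' j} : Finset ι) := by
    intro k hk
    simp only [mem_union, mem_filter, mem_univ, true_and] at hk ⊢
    by_contra! h
    exact hk (h.1.symm.trans h.2)
  have hunion :=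
    card_union_add_card_inter ({j | x j ≠ c j} : Finset ι) ({j | x j ≠ c' j} : Finset ι)
  have := card_le_card hsub
  rw [disjoint_iff_inter_eq_empty, ← Finset.card_eq_zero]
  simp only [hammingDist] at hc hc' hcc'
  omega

lemma even_card_of_forall_exists_hammingDist_eq_two {C : Finset (ι → α)}
    (hC : (C : Set (ι → α)).Pairwise (4 ≤ hammingDist · ·)) (x : ι → α)
    (hcover : ∀ i, ∃ c ∈ C, hammingDist x c = 2 ∧ x i ≠ c i) : Even (card ι) := by
  set S := C.filter (hammingDist x · = 2)
  set supp : (ι → α) → Finset ι := fun c => {j | x j ≠ c j}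
  have hunion : S.biUnion supp = univ := by
    refine eq_univ_of_forall fun i => ?_
    obtain ⟨c, hc, hxc, hi⟩ := hcover i
    exact mem_biUnion.2 ⟨c, mem_filter.2 ⟨hc, hxc⟩, mem_filter.2 ⟨mem_univ i, hi⟩⟩
  have hdisj : (S : Set (ι → α)).PairwiseDisjoint supp := fun c hc c' hc' hne =>
    disjoint_filter_ne_of_hammingDist_eq_two (mem_filter.1 hc).2 (mem_filter.1 hc').2
      (hC (mem_filter.1 hc).1 (mem_filter.1 hc').1 hne)
  have hsum : card ι = #S * 2 := by
    rw [← card_univ, ← hunion, card_biUnion hdisj]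
    exact sum_const_nat fun c hc => (mem_filter.1 hc).2
  exact ⟨#S, by omega⟩

lemma exists_hammingDist_eq_two [Nontrivial α] (hι : 1 < card ι) (c : ι → α) :
    ∃ x, hammingDist x c = 2 := by
  obtain ⟨i, j, hij⟩ := Fintype.exists_pair_of_one_lt_card hι
  obtain ⟨a, ha⟩ := exists_ne (c i)
  obtain ⟨b, hb⟩ := exists_ne (c j)
  refine ⟨update (update c i a) j b, ?_⟩
  have hsupp : ({k | update (update c i a) j b k ≠ c k} : Finset ι) = {i, j} := by
    ext k
    by_cases hkj : k = j
    · subst hkj; simpa using hb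
    · by_cases hki : k = i
      · subst hki; simpa [hkj] using ha
      · simp [hki, hkj]
  rw [hammingDist, hsupp, card_pair hij]

lemma exists_forall_two_le_hammingDist [Nontrivial α] (hι : 1 < card ι) {C : Finset (ι → α)}
    (hC : (C : Set (ι → α)).Pairwise (4 ≤ hammingDist · ·)) (hne : C.Nonempty) :
    ∃ x, ∀ c ∈ C, 2 ≤ hammingDist x c := by
  obtain ⟨c₀, hc₀⟩ := hne
  obtain ⟨x, hx⟩ := exists_hammingDist_eq_two hι c₀
  refine ⟨x, fun c hc => ?_⟩
  rcases eq_or_ne c c₀ with rfl | hne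
  · exact hx.ge
  · have := hC hc hc₀ hne
    have := hammingDist_triangle_left c c₀ x
    omega

variable [Fintype α]

lemma filter_hammingDist_le_one_eq (c : ι → α) :
    ({x | hammingDist x c ≤ 1} : Finset (ι → α)) =
      insert c (univ.biUnion fun i => (univ.erase (c i)).image (update c i)) := by
  ext x
  simp only [mem_filter, mem_univ, true_and, mem_insert, mem_biUnion, mem_image, mem_erase,
    Nat.le_one_iff_eq_zero_or_eq_one, hammingDist_eq_zero, hammingDist_eq_one_iff]
  aesop

lemma card_filter_hammingDist_le_one (c : ι → α) :
    #{x | hammingDist x c ≤ 1} = 1 + card ι * (card α - 1) := by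
  have hc : c ∉ univ.biUnion fun i => (univ.erase (c i)).image (update c i) := by
    simp only [mem_biUnion, mem_image, mem_erase, not_exists, not_and]
    intro i _ a ha h
    exact ha.1 (by simpa using congrFun h i)
  have hdisj : (↑(univ : Finset ι) : Set ι).PairwiseDisjoint
      fun i => (univ.erase (c i)).image (update c i) := by
    intro i _ j _ hij
    simp only [onFun, disjoint_left, mem_image, mem_erase, not_exists, not_and]
    rintro _ ⟨a, -, rfl⟩ b hb h
    exact hb.1 (by simpa [update_of_ne (Ne.symm hij)] using congrFun h j)
  rw [filter_hammingDist_le_one_eq, card_insert_of_notMem hc, card_biUnion hdisj]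
  simp [card_image_of_injective _ (update_injective c _), card_univ, add_comm]

lemma exists_mem_hammingDist_le_one_of_card_mul_eq {D : Finset (ι → α)}
    (hD : (D : Set (ι → α)).Pairwise (3 ≤ hammingDist · ·))
    (hcard : #D * (1 + card ι * (card α - 1)) = card α ^ card ι) (y : ι → α) :
    ∃ c ∈ D, hammingDist y c ≤ 1 := by
  have hdisj : (D : Set (ι → α)).PairwiseDisjoint
      fun c => ({x | hammingDist x c ≤ 1} : Finset (ι → α)) := by
    intro c hc c' hc' hne
    simp only [onFun, disjoint_left, mem_filter, mem_univ, true_and]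
    intro x hxc hxc'
    have := hD hc hc' hne
    have := hammingDist_triangle_left c c' x
    omega
  have hcover : D.biUnion (fun c => ({x | hammingDist x c ≤ 1} : Finset (ι → α))) = univ := by
    apply eq_univ_of_card
    simp only [card_biUnion hdisj, card_filter_hammingDist_le_one, sum_const, smul_eq_mul,
      hcard, card_fun]
  obtain ⟨c, hc, hyc⟩ := mem_biUnion.1 (hcover ▸ mem_univ y)
  exact ⟨c, hc, (mem_filter.1 hyc).2⟩

lemma exists_mem_hammingDist_eq_two_and_ne {n : ℕ} {C : Finset (Fin (n + 1) → α)}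
    (hC : (C : Set (Fin (n + 1) → α)).Pairwise (4 ≤ hammingDist · ·))
    (hcard : #C * (1 + n * (card α - 1)) = card α ^ n)
    {x : Fin (n + 1) → α} (hx : ∀ c ∈ C, 2 ≤ hammingDist x c) (i : Fin (n + 1)) :
    ∃ c ∈ C, hammingDist x c = 2 ∧ x i ≠ c i := by
  have hpunct (c c' : Fin (n + 1) → α) :
      hammingDist c c' ≤ hammingDist (i.removeNth c) (i.removeNth c') + 1 := by
    rw [hammingDist_eq_hammingDist_removeNth_add c c' i]
    split_ifs <;> omega
  have hinj : Set.InjOn i.removeNth (C : Set (Fin (n + 1) → α)) := by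
    intro c hc c' hc' h
    by_contra hne
    have := hC hc hc' hne
    have := hpunct c c'
    simp only [h, hammingDist_self] at this
    omega
  have hsep : (C.image i.removeNth : Set (Fin n → α)).Pairwise (3 ≤ hammingDist · ·) := by
    intro d hd d' hd' hne
    obtain ⟨c, hc, rfl⟩ := mem_image.1 hd
    obtain ⟨c', hc', rfl⟩ := mem_image.1 hd'
    have := hC hc hc' (fun h => hne (h ▸ rfl))
    have := hpunct c c'
    omega
  obtain ⟨_, hd, hxd⟩ := exists_mem_hammingDist_le_one_of_card_mul_eq hsep
    (by rwa [card_image_of_injOn hinj, Fintype.card_fin]) (i.removeNth x)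
  obtain ⟨c, hc, rfl⟩ := mem_image.1 hd
  have hsplit := hammingDist_eq_hammingDist_removeNth_add x c i
  have := hx c hc
  refine ⟨c, hc, ?_⟩
  split_ifs at hsplit with h
  · exact ⟨by omega, h⟩
  · omega

end HammingCodes

lemma codeDist_le_dist {V : Type*} (G : SimpleGraph V) {C : Set V} {x y : V} (hx : x ∈ C)
    (hy : y ∈ C) (hne : x ≠ y) : codeDist G C ≤ G.dist x y :=
  Nat.sInf_le ⟨x, hx, y, hy, hne, rfl⟩

section HammingGraph

variable {n q : ℕ}

lemma hammingGraph_adj_update (x : Fin n → ZMod q) {i : Fin n} {a : ZMod q} (ha : a ≠ x i) :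
    (hammingGraph n q).Adj x (update x i a) :=
  (hammingDist_comm _ _).trans (hammingDist_eq_one_iff.2 ⟨i, a, ha, rfl⟩)

lemma hammingGraph_exists_walk_length_le_card (y : Fin n → ZMod q) (s : Finset (Fin n)) :
    ∀ x, (∀ j ∉ s, x j = y j) → ∃ w : (hammingGraph n q).Walk x y, w.length ≤ #s := by
  induction s using Finset.induction_on with
  | empty =>
    intro x hx
    obtain rfl : x = y := funext fun j => hx j (notMem_empty j)
    exact ⟨.nil, le_rfl⟩
  | insert i s hi ih =>
    intro x hx
    rw [card_insert_of_notMem hi]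
    by_cases hxi : x i = y i
    · obtain ⟨w, hw⟩ := ih x fun j hj => by
        by_cases hji : j = i
        · exact hji ▸ hxi
        · exact hx j (by simp [hji, hj])
      exact ⟨w, by omega⟩
    · obtain ⟨w, hw⟩ := ih (update x i (y i)) fun j hj => by
        by_cases hji : j = i
        · subst hji; simp
        · rw [update_of_ne hji]; exact hx j (by simp [hji, hj])
      exact ⟨.cons (hammingGraph_adj_update x (Ne.symm hxi)) w, by simpa using hw⟩

lemma hammingGraph_dist_le_hammingDist (x y : Fin n → ZMod q) :
    (hammingGraph n q).dist x y ≤ hammingDist x y := by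
  obtain ⟨w, hw⟩ := hammingGraph_exists_walk_length_le_card y {j | x j ≠ y j} x fun j hj => by simpa using hj
  exact (SimpleGraph.dist_le w).trans hw

end HammingGraph

/-- Corollary 1 (Statement 13): if `q ≥ 3` is odd, then there is no MDS code with
distance `4` in `H(q+2,q)`, i.e. no code with code distance `4` and cardinality
`q^(q−1)`. -/
theorem statement13 (q : ℕ) (hq : 3 ≤ q) (hodd : Odd q) :
    ¬ ∃ C : Set (Fin (q + 2) → ZMod q),
        C.Nonempty ∧ codeDist (hammingGraph (q + 2) q) C = 4 ∧ C.ncard = q ^ (q - 1) := by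
  rintro ⟨C, hne, hdist, hcard⟩
  classical
  have : Fact (1 < q) := ⟨by omega⟩
  have hsep : (C.toFinset : Set (Fin (q + 2) → ZMod q)).Pairwise (4 ≤ hammingDist · ·) := by
    rw [Set.coe_toFinset]
    exact fun c hc c' hc' hne =>
      hdist ▸ (codeDist_le_dist _ hc hc' hne).trans (hammingGraph_dist_le_hammingDist c c')
  have hMDS : #C.toFinset * (1 + (q + 1) * (card (ZMod q) - 1)) = card (ZMod q) ^ (q + 1) := by
    rw [ZMod.card, ← Set.ncard_eq_toFinset_card', hcard]
    obtain ⟨k, rfl⟩ : ∃ k, q = k + 1 := ⟨q - 1, by omega⟩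
    simp only [Nat.add_sub_cancel]
    ring
  obtain ⟨x, hx⟩ := exists_forall_two_le_hammingDist (by simp) hsep (by simpa using hne)
  have heven := even_card_of_forall_exists_hammingDist_eq_two hsep x
    (exists_mem_hammingDist_eq_two_and_ne hsep hMDS hx)
  rw [Fintype.card_fin] at heven
  exact Nat.not_even_iff_odd.2 (by simpa [Nat.odd_add] using hodd) heven
end
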